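/- For any infinite word ρ over Σ and state p of a Büchi automaton M with finite state set Q, (p, ρ, true) ∈ Δ^ω if and only if there exists a factorization ρ = σ₀σ₁σ₂⋯ into nonempty finite words and a sequence of states q₀ = p, q₁, q₂, … and booleans b₀, b₁, … such that (qᵢ, σᵢ, q_{i+1}, bᵢ) ∈ Δ* for every i and bᵢ = true for infinitely many i. -/

import Mathlib

/-!
A run visiting `F` infinitely often factors into one-letter pieces, each flagged by whether
it touches `F`. Conversely, the finite runs on the nonempty blocks `σᵢ` share their
endpoints `qᵢ₊₁`, so they glue to a run on `ρ`; position `m` lies in the unique block `i`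
with `|σ₀⋯σᵢ₋₁| ≤ m < |σ₀⋯σᵢ|`, and a final state seen in block `i` sits at a position `≥ i`.
-/

/-- `DeltaStar Δ F p w q b`: there is a finite run of the Büchi automaton with
transition relation `Δ` and final states `F` from `p` to `q` reading the word `w`,
where `b` records whether the run visits a final state. -/
inductive DeltaStar {Q A : Type} (Δ : Q → A → Q → Prop) (F : Q → Bool) :
    Q → List A → Q → Bool → Prop
  | nil (p : Q) : DeltaStar Δ F p [] p (F p)
  | cons {q r : Q} {w : List A} {b : Bool} (p : Q) (a : A) :
      Δ p a q → DeltaStar Δ F q w r b → DeltaStar Δ F p (a :: w) r (F p || b)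

/-- Two finite words are `M`-equivalent iff the extended transition relation `Δ*`
does not distinguish them. -/
def MEquiv {Q A : Type} (Δ : Q → A → Q → Prop) (F : Q → Bool) (w w' : List A) : Prop :=
  ∀ p q b, DeltaStar Δ F p w q b ↔ DeltaStar Δ F p w' q b

/-- `DeltaOmega Δ F p ρ`: there is an infinite run starting in `p` reading the
infinite word `ρ` that visits a final state infinitely often, i.e. `(p, ρ, true) ∈ Δ^ω`. -/
def DeltaOmega {Q A : Type} (Δ : Q → A → Q → Prop) (F : Q → Bool) (p : Q) (ρ : ℕ → A) : Prop :=
  ∃ r : ℕ → Q, r 0 = p ∧ (∀ i, Δ (r i) (ρ i) (r (i + 1))) ∧ ∀ n, ∃ m, n ≤ m ∧ F (r m) = true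

/-- Concatenation of a finite word with an infinite word. -/
def appendInf {A : Type} (σ : List A) (ρ : ℕ → A) : ℕ → A := fun k =>
  if h : k < σ.length then σ.get ⟨k, h⟩ else ρ (k - σ.length)

/-- `IsFlatten σ ρ`: the infinite word `ρ` is the infinite concatenation `σ₀σ₁σ₂⋯`. -/
def IsFlatten {A : Type} (σ : ℕ → List A) (ρ : ℕ → A) : Prop :=
  ∀ n k (h : k < (σ n).length),
    ρ ((∑ i ∈ Finset.range n, (σ i).length) + k) = (σ n).get ⟨k, h⟩

open Finset

namespace DeltaStar

variable {Q A : Type} {Δ : Q → A → Q → Prop} {F : Q → Bool}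

theorem singleton {p q : Q} {a : A} (h : Δ p a q) : DeltaStar Δ F p [a] q (F p || F q) :=
  .cons p a h (.nil q)

theorem exists_run {p q : Q} {w : List A} {b : Bool} (h : DeltaStar Δ F p w q b) :
    ∃ s : ℕ → Q, s 0 = p ∧ s w.length = q ∧
      (∀ k (hk : k < w.length), Δ (s k) (w.get ⟨k, hk⟩) (s (k + 1))) ∧
      (b = true → ∃ k ≤ w.length, F (s k) = true) := by
  induction h with
  | nil p =>
    exact ⟨fun _ => p, rfl, rfl, fun k hk => absurd hk (Nat.not_lt_zero k),
      fun hb => ⟨0, le_rfl, hb⟩⟩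
  | @cons q r w b p a hpq _ ih =>
    obtain ⟨s, hs0, hslen, hstep, hF⟩ := ih
    refine ⟨fun k => Nat.casesOn k p s, rfl, hslen, ?_, ?_⟩
    · rintro (_ | k) hk
      · simpa [hs0] using hpq
      · exact hstep k (Nat.lt_of_succ_lt_succ hk)
    · intro hb
      rcases Bool.or_eq_true_iff.mp hb with hp | hw
      · exact ⟨0, Nat.zero_le _, hp⟩
      · obtain ⟨k, hk, hFk⟩ := hF hw
        exact ⟨k + 1, Nat.succ_le_succ hk, hFk⟩

end DeltaStar

section Blocks

variable {L : ℕ → ℕ}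

theorem le_sum_range_of_pos (hL : ∀ n, 0 < L n) (n : ℕ) : n ≤ ∑ i ∈ range n, L i := by
  simpa using Finset.card_nsmul_le_sum (range n) L 1 fun i _ => hL i

theorem exists_eq_sum_range_add (hL : ∀ n, 0 < L n) (m : ℕ) :
    ∃ n k, k < L n ∧ m = ∑ i ∈ range n, L i + k := by
  have hex : ∃ n, m < ∑ i ∈ range (n + 1), L i :=
    ⟨m, (Nat.lt_succ_self m).trans_le (le_sum_range_of_pos hL (m + 1))⟩
  obtain ⟨n, hlt, hmin⟩ :
      ∃ n, m < ∑ i ∈ range (n + 1), L i ∧ ∀ j < n, ¬m < ∑ i ∈ range (j + 1), L i :=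
    ⟨Nat.find hex, Nat.find_spec hex, fun _ => Nat.find_min hex⟩
  rw [sum_range_succ] at hlt
  have hle : ∑ i ∈ range n, L i ≤ m := by
    rcases n with _ | j
    · simp
    · exact not_lt.mp (hmin j (Nat.lt_succ_self j))
  exact ⟨n, m - ∑ i ∈ range n, L i, by omega, by omega⟩

theorem sum_range_add_inj {n n' k k' : ℕ} (hk : k < L n) (hk' : k' < L n')
    (h : ∑ i ∈ range n, L i + k = ∑ i ∈ range n', L i + k') : n = n' ∧ k = k' := by
  have key : ∀ {n n' k k'}, k < L n → n < n' →
      ∑ i ∈ range n, L i + k < ∑ i ∈ range n', L i + k' :=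
    fun {n n' k k'} hk hnn' => calc
      ∑ i ∈ range n, L i + k < ∑ i ∈ range (n + 1), L i := by rw [sum_range_succ]; omega
      _ ≤ ∑ i ∈ range n', L i := sum_le_sum_of_subset (range_subset_range.mpr hnn')
      _ ≤ ∑ i ∈ range n', L i + k' := Nat.le_add_right _ _
  obtain rfl : n = n' := by
    rcases lt_trichotomy n n' with hlt | heq | hgt
    · exact absurd h (key hk hlt).ne
    · exact heq
    · exact absurd h (key hk' hgt).ne'
  exact ⟨rfl, by omega⟩

theorem exists_glue {α : Type} (hL : ∀ n, 0 < L n) (s : ℕ → ℕ → α)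
    (hs : ∀ n, s n (L n) = s (n + 1) 0) :
    ∃ r : ℕ → α, ∀ n k, k ≤ L n → r (∑ i ∈ range n, L i + k) = s n k := by
  choose blk off hoff hm using exists_eq_sum_range_add hL
  have hr : ∀ n k, k < L n →
      s (blk (∑ i ∈ range n, L i + k)) (off (∑ i ∈ range n, L i + k)) = s n k := by
    intro n k hk
    obtain ⟨hn, hk⟩ := sum_range_add_inj (hoff _) hk (hm _).symm
    rw [hn, hk]
  refine ⟨fun m => s (blk m) (off m), fun n k hk => ?_⟩
  rcases hk.lt_or_eq with hk | rfl
  · exact hr n k hk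
  · rw [hs, ← hr (n + 1) 0 (hL _), sum_range_succ, Nat.add_zero]

end Blocks

theorem isFlatten_singleton {A : Type} (ρ : ℕ → A) : IsFlatten (fun n => [ρ n]) ρ := by
  rintro n (_ | k) hk
  · simp
  · simp at hk

theorem deltaOmega_of_isFlatten {Q A : Type} {Δ : Q → A → Q → Prop} {F : Q → Bool} {p : Q}
    {ρ : ℕ → A} {σ : ℕ → List A} {q : ℕ → Q} {b : ℕ → Bool} (hflat : IsFlatten σ ρ)
    (hne : ∀ i, σ i ≠ []) (hq0 : q 0 = p)
    (hrun : ∀ i, DeltaStar Δ F (q i) (σ i) (q (i + 1)) (b i))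
    (hb : ∀ n, ∃ m, n ≤ m ∧ b m = true) : DeltaOmega Δ F p ρ := by
  have hL : ∀ n, 0 < (σ n).length := fun n => List.length_pos_iff.mpr (hne n)
  choose s hs0 hslen hstep hF using fun n => (hrun n).exists_run
  obtain ⟨r, hr⟩ := exists_glue hL s fun n => by rw [hslen, hs0]
  refine ⟨r, by simpa [hs0, hq0] using hr 0 0 (Nat.zero_le _), fun m => ?_, fun N => ?_⟩
  · obtain ⟨n, k, hk, rfl⟩ := exists_eq_sum_range_add hL m
    rw [hr n k hk.le, add_assoc, hr n (k + 1) hk, hflat n k hk]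
    exact hstep n k hk
  · obtain ⟨m, hm, hbm⟩ := hb N
    obtain ⟨k, hk, hFk⟩ := hF m hbm
    have hmk : m ≤ ∑ i ∈ range m, (σ i).length + k :=
      (le_sum_range_of_pos hL m).trans (Nat.le_add_right _ k)
    exact ⟨_, hm.trans hmk, (hr m k hk).symm ▸ hFk⟩

theorem deltaOmega_iff_factorization_general {Q A : Type}
    (Δ : Q → A → Q → Prop) (F : Q → Bool) (p : Q) (ρ : ℕ → A) :
    DeltaOmega Δ F p ρ ↔
      ∃ (σ : ℕ → List A) (q : ℕ → Q) (b : ℕ → Bool),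
        IsFlatten σ ρ ∧ (∀ i, σ i ≠ []) ∧ q 0 = p ∧
        (∀ i, DeltaStar Δ F (q i) (σ i) (q (i + 1)) (b i)) ∧
        (∀ n, ∃ m, n ≤ m ∧ b m = true) := by
  constructor
  · rintro ⟨r, hr0, hstep, hF⟩
    refine ⟨fun n => [ρ n], r, fun n => F (r n) || F (r (n + 1)),
      isFlatten_singleton ρ,
      fun _ => List.cons_ne_nil _ _, hr0, fun i => .singleton (hstep i), fun n => ?_⟩
    obtain ⟨m, hm, hFm⟩ := hF n
    exact ⟨m, hm, by simp [hFm]⟩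
  · rintro ⟨σ, q, b, hflat, hne, hq0, hrun, hb⟩
    exact deltaOmega_of_isFlatten hflat hne hq0 hrun hb

/-- `(p, ρ, true) ∈ Δ^ω` iff `ρ` factors into nonempty finite words
`σ₀σ₁σ₂⋯` along states `q₀ = p, q₁, …` and flags `b₀, b₁, …` with
`(qᵢ, σᵢ, q_{i+1}, bᵢ) ∈ Δ*` for all `i` and `bᵢ = true` infinitely often. -/
theorem deltaOmega_iff_factorization {Q A : Type} [Finite Q]
    (Δ : Q → A → Q → Prop) (F : Q → Bool) (p : Q) (ρ : ℕ → A) :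
    DeltaOmega Δ F p ρ ↔
      ∃ (σ : ℕ → List A) (q : ℕ → Q) (b : ℕ → Bool),
        IsFlatten σ ρ ∧ (∀ i, σ i ≠ []) ∧ q 0 = p ∧
        (∀ i, DeltaStar Δ F (q i) (σ i) (q (i + 1)) (b i)) ∧
        (∀ n, ∃ m, n ≤ m ∧ b m = true) :=
  deltaOmega_iff_factorization_general Δ F p ρ
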